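/- arXiv:2111.15136 — 7 statements merged into one kernel-verified Lean document; each statement's English description precedes it below -/
import Mathlib

section
/- For any u ∈ H¹(ℝ) and any ξ ∈ ℝ, with φ_c(x) = a·e^{-|x|} (a > 0), one has ∫_ℝ (u² + u_x²) dx − 2a² = ‖u − φ_c(· − ξ)‖²_{H¹} + 4a(u(ξ) − a). -/
open MeasureTheory Set Filter

theorem H1_pointwise_identity (a ξ : ℝ) (ha : 0 < a)
    (u u' : ℝ → ℝ)
    (hu : ∀ x, HasDerivAt u (u' x) x)
    (hu2 : Integrable (fun x => (u x)^2))
    (hu'2 : Integrable (fun x => (u' x)^2))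
    (hutop : Filter.Tendsto u Filter.atTop (nhds 0))
    (hubot : Filter.Tendsto u Filter.atBot (nhds 0))
    (φ φ' : ℝ → ℝ)
    (hφ : ∀ x, φ x = a * Real.exp (-|x|))
    (hφ' : ∀ x, φ' x = -(Real.sign x) * a * Real.exp (-|x|)) :
    (∫ x : ℝ, ((u x)^2 + (u' x)^2)) - 2 * a^2
      = (∫ x : ℝ, ((u x - φ (x - ξ))^2 + (u' x - φ' (x - ξ))^2))
        + 4 * a * (u ξ - a) := by
  set g : ℝ → ℝ := fun x => a * Real.exp (-|x - ξ|) with hg_def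
  set g' : ℝ → ℝ := fun x => -(Real.sign (x - ξ)) * a * Real.exp (-|x - ξ|) with hg'_def
  have hφg : ∀ x, φ (x - ξ) = g x := fun x => hφ _
  have hφ'g : ∀ x, φ' (x - ξ) = g' x := fun x => hφ' _
  have hu_cont : Continuous u := continuous_iff_continuousAt.2 fun x => (hu x).continuousAt
  have hu'_meas : Measurable u' := by
    have h : u' = deriv u := funext fun x => ((hu x).deriv).symm
    rw [h]; exact measurable_deriv u
  have hg_cont : Continuous g := by
    apply continuous_const.mul
    exact Real.continuous_exp.comp (((continuous_id.sub continuous_const).abs).neg)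
  have hsign : Measurable Real.sign := by
    have h : Real.sign = fun r : ℝ => if r < 0 then (-1:ℝ) else if 0 < r then 1 else 0 := rfl
    rw [h]
    exact Measurable.ite (measurableSet_lt measurable_id measurable_const) measurable_const
      (Measurable.ite (measurableSet_lt measurable_const measurable_id) measurable_const
        measurable_const)
  have hg'_meas : Measurable g' :=
    ((hsign.comp (measurable_id.sub measurable_const)).neg.mul measurable_const).mul
      (((measurable_id.sub measurable_const).abs.neg).exp)
  -- integrability of exp(-(2|x|))
  have hIoiInt : IntegrableOn (fun x : ℝ => Real.exp (-(2 * x))) (Ioi (0:ℝ)) := by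
    have h := exp_neg_integrableOn_Ioi (0:ℝ) (show (0:ℝ) < 2 by norm_num)
    exact h.congr_fun (fun x _ => by simp only [neg_mul]) measurableSet_Ioi
  have hIoi : IntegrableOn (fun x : ℝ => Real.exp (-(2 * |x|))) (Ioi (0:ℝ)) := by
    refine hIoiInt.congr_fun (fun x hx => ?_) measurableSet_Ioi
    rw [abs_of_pos hx]
  have hIic : IntegrableOn (fun x : ℝ => Real.exp (-(2 * |x|))) (Iic (0:ℝ)) := by
    refine Integrable.mono' (integrableOn_exp_Iic 0) ?_ ?_
    · exact (Real.continuous_exp.comp (continuous_const.mul continuous_abs).neg).aestronglyMeasurable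
    · filter_upwards [ae_restrict_mem measurableSet_Iic] with x hx
      rw [Real.norm_eq_abs, abs_of_pos (Real.exp_pos _)]
      apply Real.exp_le_exp.2
      have hx' : x ≤ 0 := hx
      rw [abs_of_nonpos hx']
      linarith
  have habs : Integrable (fun x : ℝ => Real.exp (-(2 * |x|))) := by
    have h := hIic.union hIoi
    rwa [Iic_union_Ioi, integrableOn_univ] at h
  have e1 : ∀ x : ℝ, (g x)^2 = a^2 * Real.exp (-(2*|x - ξ|)) := by
    intro x
    show (a * Real.exp (-|x-ξ|))^2 = _
    rw [mul_pow, sq (Real.exp _), ← Real.exp_add]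
    ring_nf
  have hg2_int : Integrable (fun x => (g x)^2) := by
    have h1 : Integrable (fun x : ℝ => Real.exp (-(2 * |x - ξ|))) := habs.comp_sub_right ξ
    exact (h1.const_mul (a^2)).congr (Filter.Eventually.of_forall fun x => (e1 x).symm)
  have hIoi_val : ∫ x in Ioi (0:ℝ), Real.exp (-(2*x)) = 1/2 := by
    have hF : ∀ x ∈ Ici (0:ℝ),
        HasDerivAt (fun y : ℝ => -(1/2) * Real.exp (-(2*y))) (Real.exp (-(2*x))) x := by
      intro x _
      have h1 : HasDerivAt (fun y : ℝ => -(2*y)) (-2) x := by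
        simpa [neg_mul] using ((hasDerivAt_id x).const_mul (-2:ℝ))
      have h2 := (h1.exp).const_mul (-(1/2):ℝ)
      have heq : Real.exp (-(2*x)) = -(1/2) * (Real.exp (-(2*x)) * -2) := by ring
      rw [heq]; exact h2
    have hT : Tendsto (fun y : ℝ => -(1/2) * Real.exp (-(2*y))) atTop (nhds 0) := by
      have h1 : Tendsto (fun y : ℝ => -(2*y)) atTop atBot :=
        tendsto_neg_atTop_atBot.comp (Tendsto.const_mul_atTop (by norm_num) tendsto_id)
      have h2 := (Real.tendsto_exp_atBot.comp h1).const_mul (-(1/2):ℝ)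
      simpa using h2
    have h := integral_Ioi_of_hasDerivAt_of_tendsto' hF hIoiInt hT
    rw [h]
    norm_num
  have hgsq_val : ∫ x, (g x)^2 = a^2 := by
    calc ∫ x, (g x)^2 = ∫ x, a^2 * Real.exp (-(2*|x - ξ|)) :=
          integral_congr_ae (Filter.Eventually.of_forall e1)
      _ = a^2 * ∫ x, Real.exp (-(2*|x - ξ|)) := integral_const_mul _ _
      _ = a^2 * ∫ x, Real.exp (-(2*|x|)) := by
          rw [integral_sub_right_eq_self (μ := volume) (fun x => Real.exp (-(2*|x|))) ξ]
      _ = a^2 * (2 * ∫ x in Ioi (0:ℝ), Real.exp (-(2*x))) := by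
          rw [integral_comp_abs (f := fun x => Real.exp (-(2*x)))]
      _ = a^2 := by rw [hIoi_val]; ring
  have hne : ∀ᵐ x : ℝ, x ≠ ξ := by
    refine ae_iff.2 ?_
    have h : {x : ℝ | ¬ x ≠ ξ} = {ξ} := by ext x; simp
    rw [h]
    exact measure_singleton ξ
  have hg'2_eq : (fun x => (g' x)^2) =ᵐ[volume] (fun x => (g x)^2) := by
    filter_upwards [hne] with x hx
    rcases Real.sign_apply_eq_of_ne_zero (x - ξ) (sub_ne_zero.2 hx) with h | h <;>
      simp only [hg'_def, hg_def, h] <;> ring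
  have hg'2_int : Integrable (fun x => (g' x)^2) := hg2_int.congr hg'2_eq.symm
  have key_bound : ∀ (f₁ f₂ : ℝ → ℝ) (x : ℝ), ‖f₁ x * f₂ x‖ ≤ (1/2) * ((f₁ x)^2 + (f₂ x)^2) := by
    intro f₁ f₂ x
    rw [Real.norm_eq_abs, abs_mul]
    nlinarith [sq_nonneg (|f₁ x| - |f₂ x|), sq_abs (f₁ x), sq_abs (f₂ x),
      abs_nonneg (f₁ x), abs_nonneg (f₂ x)]
  have hP : Integrable (fun x => u x * g x) :=
    Integrable.mono' ((hu2.add hg2_int).const_mul (1/2))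
      ((hu_cont.mul hg_cont).aestronglyMeasurable)
      (Filter.Eventually.of_forall fun x => key_bound u g x)
  have hQ : Integrable (fun x => u' x * g' x) :=
    Integrable.mono' ((hu'2.add hg'2_int).const_mul (1/2))
      ((hu'_meas.mul hg'_meas).aestronglyMeasurable)
      (Filter.Eventually.of_forall fun x => key_bound u' g' x)
  have hPQ : Integrable (fun x => u x * g x + u' x * g' x) := hP.add hQ
  have hIic_val : ∫ x in Iic ξ, (u x * g x + u' x * g' x) = a * u ξ := by
    have hFd : ∀ x : ℝ, HasDerivAt (fun y => a * (u y * Real.exp (y - ξ)))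
        (a * (u' x + u x) * Real.exp (x - ξ)) x := by
      intro x
      have he : HasDerivAt (fun y : ℝ => Real.exp (y - ξ)) (Real.exp (x - ξ)) x := by
        simpa using (((hasDerivAt_id x).sub_const ξ).exp)
      have h2 := ((hu x).mul he).const_mul a
      have heq : a * (u' x + u x) * Real.exp (x - ξ)
          = a * (u' x * Real.exp (x - ξ) + u x * Real.exp (x - ξ)) := by ring
      rw [heq]; exact h2
    have haeIic : ∀ᵐ x ∂(volume.restrict (Iic ξ)),
        u x * g x + u' x * g' x = a * (u' x + u x) * Real.exp (x - ξ) := by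
      filter_upwards [ae_restrict_mem measurableSet_Iic, ae_restrict_of_ae hne] with x hx hxne
      have hlt : x < ξ := lt_of_le_of_ne hx hxne
      have habs' : |x - ξ| = -(x - ξ) := abs_of_neg (by linarith)
      have hs : Real.sign (x - ξ) = -1 := Real.sign_of_neg (by linarith)
      simp only [hg_def, hg'_def, hs, habs', neg_neg]
      ring
    have hF'int : IntegrableOn (fun x => a * (u' x + u x) * Real.exp (x - ξ)) (Iic ξ) :=
      (hPQ.integrableOn).congr haeIic
    have hFtend : Tendsto (fun y => a * (u y * Real.exp (y - ξ))) atBot (nhds 0) := by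
      have he : Tendsto (fun y : ℝ => Real.exp (y - ξ)) atBot (nhds 0) := by
        refine Real.tendsto_exp_atBot.comp ?_
        simpa [sub_eq_add_neg] using (tendsto_atBot_add_const_right atBot (-ξ) tendsto_id)
      have h2 := (hubot.mul he).const_mul a
      simpa using h2
    have h := integral_Iic_of_hasDerivAt_of_tendsto' (fun x _ => hFd x) hF'int hFtend
    rw [integral_congr_ae haeIic, h]
    simp
  have hIoi_val2 : ∫ x in Ioi ξ, (u x * g x + u' x * g' x) = a * u ξ := by
    have hFd : ∀ x : ℝ, HasDerivAt (fun y => -(a * (u y * Real.exp (ξ - y))))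
        (a * (u x - u' x) * Real.exp (ξ - x)) x := by
      intro x
      have he : HasDerivAt (fun y : ℝ => Real.exp (ξ - y)) (-Real.exp (ξ - x)) x := by
        have h1 : HasDerivAt (fun y : ℝ => ξ - y) (-1) x := by
          simpa using ((hasDerivAt_id x).const_sub ξ)
        simpa using h1.exp
      have h2 := (((hu x).mul he).const_mul a).neg
      have heq : a * (u x - u' x) * Real.exp (ξ - x)
          = -(a * (u' x * Real.exp (ξ - x) + u x * -Real.exp (ξ - x))) := by ring
      rw [heq]; exact h2
    have haeIoi : ∀ᵐ x ∂(volume.restrict (Ioi ξ)),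
        u x * g x + u' x * g' x = a * (u x - u' x) * Real.exp (ξ - x) := by
      filter_upwards [ae_restrict_mem measurableSet_Ioi] with x hx
      have hlt : ξ < x := hx
      have habs' : |x - ξ| = x - ξ := abs_of_pos (by linarith)
      have hs : Real.sign (x - ξ) = 1 := Real.sign_of_pos (by linarith)
      simp only [hg_def, hg'_def, hs, habs']
      rw [show -(x - ξ) = ξ - x by ring]
      ring
    have hF'int : IntegrableOn (fun x => a * (u x - u' x) * Real.exp (ξ - x)) (Ioi ξ) :=
      (hPQ.integrableOn).congr haeIoi
    have hFtend : Tendsto (fun y => -(a * (u y * Real.exp (ξ - y)))) atTop (nhds 0) := by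
      have he : Tendsto (fun y : ℝ => Real.exp (ξ - y)) atTop (nhds 0) := by
        refine Real.tendsto_exp_atBot.comp ?_
        exact Tendsto.congr (fun x => (sub_eq_add_neg ξ x).symm) (tendsto_atBot_add_const_left atTop ξ tendsto_neg_atTop_atBot)
      have h2 := ((hutop.mul he).const_mul a).neg
      simpa using h2
    have h := integral_Ioi_of_hasDerivAt_of_tendsto' (fun x _ => hFd x) hF'int hFtend
    rw [integral_congr_ae haeIoi, h]
    simp
  have hI3 : ∫ x, (u x * g x + u' x * g' x) = 2 * (a * u ξ) := by
    rw [← intervalIntegral.integral_Iic_add_Ioi hPQ.integrableOn hPQ.integrableOn, hIic_val, hIoi_val2]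
    ring
  have hI2 : ∫ x, ((g x)^2 + (g' x)^2) = 2 * a^2 := by
    rw [integral_add hg2_int hg'2_int, integral_congr_ae hg'2_eq, hgsq_val]
    ring
  have hexp : (fun x => (u x - g x)^2 + (u' x - g' x)^2)
      = fun x => (((u x)^2 + (u' x)^2) + ((g x)^2 + (g' x)^2))
          - 2 * (u x * g x + u' x * g' x) := by
    funext x; ring
  have hfa : Integrable (fun x : ℝ => u x ^ 2 + u' x ^ 2) volume := hu2.add hu'2
  have hfb : Integrable (fun x : ℝ => g x ^ 2 + g' x ^ 2) volume := hg2_int.add hg'2_int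
  have hf1 : Integrable (fun x : ℝ => u x ^ 2 + u' x ^ 2 + (g x ^ 2 + g' x ^ 2)) volume :=
    hfa.add hfb
  have hRHS : ∫ x, ((u x - g x)^2 + (u' x - g' x)^2)
      = (∫ x, ((u x)^2 + (u' x)^2)) + 2 * a^2 - 2 * (2 * (a * u ξ)) := by
    rw [hexp, integral_sub hf1 (hPQ.const_mul 2), integral_add hfa hfb, hI2,
      integral_const_mul, hI3]
  have hgoal2 : (∫ x : ℝ, ((u x - φ (x - ξ))^2 + (u' x - φ' (x - ξ))^2))
      = ∫ x, ((u x - g x)^2 + (u' x - g' x)^2) :=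
    integral_congr_ae (Filter.Eventually.of_forall fun x => by simp only [hφg, hφ'g])
  rw [hgoal2, hRHS]
  ring
end

section
/- Let u ∈ H¹(ℝ) be smooth enough (say u ∈ H³) and suppose m = u − u'' ≥ 0 on ℝ. Then u ≥ 0 and |u'(x)| ≤ u(x) for all x ∈ ℝ. -/
open MeasureTheory

theorem nonneg_momentum_implies_bounds
    (u u' u'' : ℝ → ℝ)
    (hu : ∀ x, HasDerivAt u (u' x) x)
    (hu' : ∀ x, HasDerivAt u' (u'' x) x)
    (hu''c : Continuous u'')
    (hm2 : Integrable (fun x => (u x - u'' x)^2))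
    (hutop : Filter.Tendsto u Filter.atTop (nhds 0))
    (hubot : Filter.Tendsto u Filter.atBot (nhds 0))
    (hu'top : Filter.Tendsto u' Filter.atTop (nhds 0))
    (hu'bot : Filter.Tendsto u' Filter.atBot (nhds 0))
    (hm : ∀ x, 0 ≤ u x - u'' x) :
    ∀ x, 0 ≤ u x ∧ |u' x| ≤ u x := by
  set F : ℝ → ℝ := fun x => Real.exp x * (u x - u' x) with hF
  set G : ℝ → ℝ := fun x => Real.exp (-x) * (u x + u' x) with hG
  have hFd : ∀ x, HasDerivAt F (Real.exp x * (u x - u'' x)) x := by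
    intro x
    have h := (Real.hasDerivAt_exp x).fun_mul ((hu x).fun_sub (hu' x))
    exact h.congr_deriv (by ring)
  have hGd : ∀ x, HasDerivAt G (-(Real.exp (-x) * (u x - u'' x))) x := by
    intro x
    have he : HasDerivAt (fun x : ℝ => Real.exp (-x)) (-Real.exp (-x)) x := by
      simpa [Function.comp_def] using (Real.hasDerivAt_exp (-x)).comp x ((hasDerivAt_id x).neg)
    have h := he.fun_mul ((hu x).fun_add (hu' x))
    exact h.congr_deriv (by ring)
  have hFmono : Monotone F := by
    apply monotone_of_deriv_nonneg
    · intro x; exact (hFd x).differentiableAt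
    · intro x
      rw [(hFd x).deriv]
      exact mul_nonneg (Real.exp_pos x).le (hm x)
  have hGanti : Antitone G := by
    apply antitone_of_deriv_nonpos
    · intro x; exact (hGd x).differentiableAt
    · intro x
      rw [(hGd x).deriv]
      exact neg_nonpos_of_nonneg (mul_nonneg (Real.exp_pos _).le (hm x))
  have hFlim : Filter.Tendsto F Filter.atBot (nhds 0) := by
    have := Real.tendsto_exp_atBot.mul (hubot.sub hu'bot)
    simpa using this
  have hGlim : Filter.Tendsto G Filter.atTop (nhds 0) := by
    have he : Filter.Tendsto (fun x : ℝ => Real.exp (-x)) Filter.atTop (nhds 0) :=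
      Real.tendsto_exp_atBot.comp Filter.tendsto_neg_atTop_atBot
    have := he.mul (hutop.add hu'top)
    simpa using this
  have hFnn : ∀ x, 0 ≤ F x := by
    intro x
    refine le_of_tendsto hFlim ?_
    filter_upwards [Filter.eventually_le_atBot x] with y hy
    exact hFmono hy
  have hGnn : ∀ x, 0 ≤ G x := by
    intro x
    refine le_of_tendsto hGlim ?_
    filter_upwards [Filter.eventually_ge_atTop x] with y hy
    exact hGanti hy
  intro x
  have h1 : 0 ≤ u x - u' x := nonneg_of_mul_nonneg_right (hFnn x) (Real.exp_pos x)
  have h2 : 0 ≤ u x + u' x := nonneg_of_mul_nonneg_right (hGnn x) (Real.exp_pos (-x))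
  constructor
  · linarith
  · rw [abs_le]; constructor <;> linarith
end

section
/- With u, v, ξ, M, g₁, g₂ as above, define h(x) = uv − (1/3)(uv)' − (1/3)u'v' for x < ξ and h(x) = uv + (1/3)(uv)' − (1/3)u'v' for x > ξ. Then ∫_ℝ h(x)g₁(x)g₂(x) dx = F[u,v] − (4/3)M², where F[u,v] = ∫_ℝ (u²v² + (1/3)u²v_x² + (1/3)v²u_x² + (4/3)uvu_xv_x − (1/3)u_x²v_x²) dx. -/
open MeasureTheory

theorem h_g1g2_energy_identity (ξ : ℝ)
    (u u' v v' : ℝ → ℝ)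
    (hu : ∀ x, HasDerivAt u (u' x) x)
    (hv : ∀ x, HasDerivAt v (v' x) x)
    (hupos : ∀ x, 0 ≤ u x) (hvpos : ∀ x, 0 ≤ v x)
    (hune : u ≠ 0) (hvne : v ≠ 0)
    (hmax : ∀ x, u x * v x ≤ u ξ * v ξ)
    (hdecaytop : Filter.Tendsto (fun x => u x * v x) Filter.atTop (nhds 0))
    (hdecaybot : Filter.Tendsto (fun x => u x * v x) Filter.atBot (nhds 0))
    (hintF : Integrable (fun x => (u x)^2 * (v x)^2 + (1/3) * (u x)^2 * (v' x)^2
        + (1/3) * (v x)^2 * (u' x)^2 + (4/3) * u x * v x * u' x * v' x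
        - (1/3) * (u' x)^2 * (v' x)^2))
    (hintb : Integrable (fun x => (u x * v x) * (u' x * v x + u x * v' x)))
    (g₁ g₂ h : ℝ → ℝ)
    (hg₁ : ∀ x, g₁ x = if x < ξ then u x - u' x else u x + u' x)
    (hg₂ : ∀ x, g₂ x = if x < ξ then v x - v' x else v x + v' x)
    (hh : ∀ x, h x = if x < ξ
        then u x * v x - (1/3) * (u' x * v x + u x * v' x) - (1/3) * (u' x * v' x)
        else u x * v x + (1/3) * (u' x * v x + u x * v' x) - (1/3) * (u' x * v' x))
    (hinth : Integrable (fun x => h x * (g₁ x * g₂ x))) :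
    ∫ x : ℝ, h x * (g₁ x * g₂ x)
      = (∫ x : ℝ, ((u x)^2 * (v x)^2 + (1/3) * (u x)^2 * (v' x)^2
          + (1/3) * (v x)^2 * (u' x)^2 + (4/3) * u x * v x * u' x * v' x
          - (1/3) * (u' x)^2 * (v' x)^2))
        - (4/3) * (u ξ * v ξ)^2 := by
  set F : ℝ → ℝ := fun x => (u x)^2 * (v x)^2 + (1/3) * (u x)^2 * (v' x)^2
      + (1/3) * (v x)^2 * (u' x)^2 + (4/3) * u x * v x * u' x * v' x
      - (1/3) * (u' x)^2 * (v' x)^2 with hF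
  set B : ℝ → ℝ := fun x => (u x * v x) * (u' x * v x + u x * v' x) with hB
  -- pointwise identities on each half line
  have key_lt : ∀ x, x < ξ → h x * (g₁ x * g₂ x) = F x - (4/3) * B x := by
    intro x hx
    simp only [hg₁ x, hg₂ x, hh x, if_pos hx, hF, hB]
    ring
  have key_ge : ∀ x, ¬ x < ξ → h x * (g₁ x * g₂ x) = F x + (4/3) * B x := by
    intro x hx
    simp only [hg₁ x, hg₂ x, hh x, if_neg hx, hF, hB]
    ring
  -- FTC on half lines for B
  have hw : ∀ x, HasDerivAt (fun y => (u y * v y) * (u y * v y) / 2) (B x) x := by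
    intro x
    have : HasDerivAt (fun y => (u y * v y) * (u y * v y) / 2) (((u' x * v x + u x * v' x) * (u x * v x) + (u x * v x) * (u' x * v x + u x * v' x)) / 2) x := (((hu x).mul (hv x)).mul ((hu x).mul (hv x))).div_const 2
    convert this using 1
    show (u x * v x) * (u' x * v x + u x * v' x) = _; ring
  have hBIic : ∫ x in Set.Iic ξ, B x = (u ξ * v ξ) * (u ξ * v ξ) / 2 := by
    have hdecay : Filter.Tendsto (fun y => (u y * v y) * (u y * v y) / 2)
        Filter.atBot (nhds 0) := by
      have : Filter.Tendsto (fun y => (u y * v y) * (u y * v y) / 2)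
          Filter.atBot (nhds ((0:ℝ) * 0 / 2)) := (hdecaybot.mul hdecaybot).div_const 2
      simpa using this
    have := integral_Iic_of_hasDerivAt_of_tendsto' (a := ξ)
      (fun x _ => hw x) hintb.integrableOn hdecay
    simpa using this
  have hBIoi : ∫ x in Set.Ioi ξ, B x = -((u ξ * v ξ) * (u ξ * v ξ) / 2) := by
    have hdecay : Filter.Tendsto (fun y => (u y * v y) * (u y * v y) / 2)
        Filter.atTop (nhds 0) := by
      have : Filter.Tendsto (fun y => (u y * v y) * (u y * v y) / 2)
          Filter.atTop (nhds ((0:ℝ) * 0 / 2)) := (hdecaytop.mul hdecaytop).div_const 2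
      simpa using this
    have := integral_Ioi_of_hasDerivAt_of_tendsto' (a := ξ)
      (fun x _ => hw x) hintb.integrableOn hdecay
    simpa using this
  -- split integrals
  have hsplit : ∫ x : ℝ, h x * (g₁ x * g₂ x)
      = (∫ x in Set.Iic ξ, h x * (g₁ x * g₂ x)) + ∫ x in Set.Ioi ξ, h x * (g₁ x * g₂ x) :=
    (intervalIntegral.integral_Iic_add_Ioi hinth.integrableOn hinth.integrableOn).symm
  have hsplitF : ∫ x : ℝ, F x
      = (∫ x in Set.Iic ξ, F x) + ∫ x in Set.Ioi ξ, F x :=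
    (intervalIntegral.integral_Iic_add_Ioi hintF.integrableOn hintF.integrableOn).symm
  have hIic : ∫ x in Set.Iic ξ, h x * (g₁ x * g₂ x)
      = (∫ x in Set.Iic ξ, F x) - (4/3) * ∫ x in Set.Iic ξ, B x := by
    have heq : ∀ᵐ x ∂(volume.restrict (Set.Iic ξ)),
        h x * (g₁ x * g₂ x) = F x - (4/3) * B x := by
      have h0 : ∀ᵐ x ∂(volume.restrict (Set.Iic ξ)), x ≠ ξ := by
        refine ae_restrict_of_ae ?_
        exact (Set.countable_singleton ξ).ae_notMem volume
      have h1 : ∀ᵐ x ∂(volume.restrict (Set.Iic ξ)), x ∈ Set.Iic ξ :=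
        ae_restrict_mem measurableSet_Iic
      filter_upwards [h0, h1] with x hne hmem
      exact key_lt x (lt_of_le_of_ne hmem hne)
    rw [integral_congr_ae heq,
      integral_sub (hintF.integrableOn.congr ?_) ((hintb.integrableOn.const_mul _))]
    · rw [integral_const_mul]
    · exact Filter.EventuallyEq.rfl
  have hIoi : ∫ x in Set.Ioi ξ, h x * (g₁ x * g₂ x)
      = (∫ x in Set.Ioi ξ, F x) + (4/3) * ∫ x in Set.Ioi ξ, B x := by
    have heq : ∀ᵐ x ∂(volume.restrict (Set.Ioi ξ)),
        h x * (g₁ x * g₂ x) = F x + (4/3) * B x := by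
      have h1 : ∀ᵐ x ∂(volume.restrict (Set.Ioi ξ)), x ∈ Set.Ioi ξ :=
        ae_restrict_mem measurableSet_Ioi
      filter_upwards [h1] with x hmem
      exact key_ge x (not_lt.mpr (le_of_lt hmem))
    rw [integral_congr_ae heq,
      integral_add (hintF.integrableOn.congr ?_) ((hintb.integrableOn.const_mul _))]
    · rw [integral_const_mul]
    · exact Filter.EventuallyEq.rfl
  rw [hsplit, hIic, hIoi, hBIic, hBIoi, hsplitF]
  ring
end

section
/- Let u, v ∈ H³(ℝ) be nonnegative with |u_x| ≤ u and |v_x| ≤ v pointwise, and let M = max_{x∈ℝ} uv. Define h as in the previous lemma (relative to a maximum point ξ of uv). Then h(x) ≤ (4/3)u(x)v(x) ≤ (4/3)M for all x ≠ ξ. -/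
theorem h_pointwise_bound (ξ M : ℝ)
    (u u' v v' : ℝ → ℝ)
    (hu : ∀ x, HasDerivAt u (u' x) x)
    (hv : ∀ x, HasDerivAt v (v' x) x)
    (hupos : ∀ x, 0 ≤ u x) (hvpos : ∀ x, 0 ≤ v x)
    (hub : ∀ x, |u' x| ≤ u x) (hvb : ∀ x, |v' x| ≤ v x)
    (hM : ∀ x, u x * v x ≤ M)
    (h : ℝ → ℝ)
    (hh : ∀ x, h x = if x < ξ
        then u x * v x - (1/3) * (u' x * v x + u x * v' x) - (1/3) * (u' x * v' x)
        else u x * v x + (1/3) * (u' x * v x + u x * v' x) - (1/3) * (u' x * v' x)) :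
    ∀ x, x ≠ ξ → h x ≤ (4/3) * (u x * v x) ∧ (4/3) * (u x * v x) ≤ (4/3) * M := by
  intro x _
  obtain ⟨hu1, hu2⟩ := abs_le.mp (hub x)
  obtain ⟨hv1, hv2⟩ := abs_le.mp (hvb x)
  constructor
  · rw [hh x]
    split_ifs with hx
    · nlinarith [mul_nonneg (by linarith : (0:ℝ) ≤ u x + u' x) (by linarith : (0:ℝ) ≤ v x + v' x)]
    · nlinarith [mul_nonneg (by linarith : (0:ℝ) ≤ u x - u' x) (by linarith : (0:ℝ) ≤ v x - v' x)]
  · linarith [hM x]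
end

section
/- Let u, v ∈ H³(ℝ) be nonnegative, not identically zero, with |u_x| ≤ u and |v_x| ≤ v pointwise, and let M = max_{x∈ℝ} uv. Then F[u,v] − (4/3)M·H[u,v] + (4/3)M² ≤ 0, where H[u,v] = ∫(uv + u_xv_x) dx and F[u,v] = ∫(u²v² + (1/3)u²v_x² + (1/3)v²u_x² + (4/3)uvu_xv_x − (1/3)u_x²v_x²) dx. -/
open MeasureTheory Set

set_option maxHeartbeats 1000000 in
theorem F_H_M_inequality (ξ : ℝ)
    (u u' v v' : ℝ → ℝ)
    (hu : ∀ x, HasDerivAt u (u' x) x)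
    (hv : ∀ x, HasDerivAt v (v' x) x)
    (hupos : ∀ x, 0 ≤ u x) (hvpos : ∀ x, 0 ≤ v x)
    (hune : u ≠ 0) (hvne : v ≠ 0)
    (hub : ∀ x, |u' x| ≤ u x) (hvb : ∀ x, |v' x| ≤ v x)
    (hmax : ∀ x, u x * v x ≤ u ξ * v ξ)
    (hdecaytop : Filter.Tendsto (fun x => u x * v x) Filter.atTop (nhds 0))
    (hdecaybot : Filter.Tendsto (fun x => u x * v x) Filter.atBot (nhds 0))
    (hintH : Integrable (fun x => u x * v x + u' x * v' x))
    (hint2 : Integrable (fun x => u x * v' x + u' x * v x))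
    (hintF : Integrable (fun x => (u x)^2 * (v x)^2 + (1/3) * (u x)^2 * (v' x)^2
        + (1/3) * (v x)^2 * (u' x)^2 + (4/3) * u x * v x * u' x * v' x
        - (1/3) * (u' x)^2 * (v' x)^2))
    (hintb : Integrable (fun x => (u x * v x) * (u' x * v x + u x * v' x))) :
    (∫ x : ℝ, ((u x)^2 * (v x)^2 + (1/3) * (u x)^2 * (v' x)^2
        + (1/3) * (v x)^2 * (u' x)^2 + (4/3) * u x * v x * u' x * v' x
        - (1/3) * (u' x)^2 * (v' x)^2))
      - (4/3) * (u ξ * v ξ) * (∫ x : ℝ, (u x * v x + u' x * v' x))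
      + (4/3) * (u ξ * v ξ)^2 ≤ 0 := by
  set M : ℝ := u ξ * v ξ with hMdef
  set fH : ℝ → ℝ := fun x => u x * v x + u' x * v' x with hfH
  set f2 : ℝ → ℝ := fun x => u x * v' x + u' x * v x with hf2
  set fF : ℝ → ℝ := fun x => (u x)^2 * (v x)^2 + (1/3) * (u x)^2 * (v' x)^2
        + (1/3) * (v x)^2 * (u' x)^2 + (4/3) * u x * v x * u' x * v' x
        - (1/3) * (u' x)^2 * (v' x)^2 with hfF
  set fb : ℝ → ℝ := fun x => (u x * v x) * (u' x * v x + u x * v' x) with hfb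
  set g : ℝ → ℝ := fun x => if x ≤ ξ then (u x - u' x) * (v x - v' x)
      else (u x + u' x) * (v x + v' x) with hg
  set hh : ℝ → ℝ := fun x =>
      if x ≤ ξ then u x * v x - (1/3) * (u' x * v' x + u x * v' x + u' x * v x)
      else u x * v x - (1/3) * u' x * v' x + (1/3) * (u x * v' x + u' x * v x) with hhh
  -- derivative of uv
  have hw : ∀ x, HasDerivAt (fun x => u x * v x) (f2 x) x := by
    intro x
    have := (hu x).mul (hv x)
    simp only [hf2]
    exact this.congr_deriv (by ring)
  have hw2 : ∀ x, HasDerivAt (fun x => (u x * v x)^2) (2 * fb x) x := by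
    intro x
    have h2 : HasDerivAt (fun x => (u x * v x) * (u x * v x))
        (f2 x * (u x * v x) + (u x * v x) * f2 x) x := (hw x).mul (hw x)
    have heq : (fun x : ℝ => (u x * v x)^2) = fun x => (u x * v x) * (u x * v x) := by
      funext y; ring
    rw [heq]
    convert h2 using 1
    simp only [hf2, hfb]; ring
  -- FTC on half-lines
  have I1 : ∫ x in Iic ξ, f2 x = M := by
    have := integral_Iic_of_hasDerivAt_of_tendsto' (f := fun x => u x * v x)
      (f' := f2) (a := ξ) (m := 0) (fun x _ => hw x) hint2.integrableOn hdecaybot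
    simpa using this
  have I2 : ∫ x in Ioi ξ, f2 x = -M := by
    have := integral_Ioi_of_hasDerivAt_of_tendsto' (f := fun x => u x * v x)
      (f' := f2) (a := ξ) (m := 0) (fun x _ => hw x) hint2.integrableOn hdecaytop
    simpa using this
  have hdecay2top : Filter.Tendsto (fun x => (u x * v x)^2) Filter.atTop (nhds 0) := by
    have := hdecaytop.mul hdecaytop
    simpa [pow_two] using this
  have hdecay2bot : Filter.Tendsto (fun x => (u x * v x)^2) Filter.atBot (nhds 0) := by
    have := hdecaybot.mul hdecaybot
    simpa [pow_two] using this
  have h2fb : Integrable (fun x => 2 * fb x) := hintb.const_mul 2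
  have J1 : ∫ x in Iic ξ, fb x = M^2 / 2 := by
    have h := integral_Iic_of_hasDerivAt_of_tendsto' (f := fun x => (u x * v x)^2)
      (f' := fun x => 2 * fb x) (a := ξ) (m := 0) (fun x _ => hw2 x)
      h2fb.integrableOn hdecay2bot
    rw [integral_const_mul] at h
    simp only [sub_zero] at h
    rw [← hMdef] at h
    linarith
  have J2 : ∫ x in Ioi ξ, fb x = -(M^2) / 2 := by
    have h := integral_Ioi_of_hasDerivAt_of_tendsto' (f := fun x => (u x * v x)^2)
      (f' := fun x => 2 * fb x) (a := ξ) (m := 0) (fun x _ => hw2 x)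
      h2fb.integrableOn hdecay2top
    rw [integral_const_mul] at h
    simp only [zero_sub] at h
    rw [← hMdef] at h
    linarith
  -- piecewise equalities
  have hgL : EqOn (fun x => fH x - f2 x) g (Iic ξ) := by
    intro x hx
    simp only [hg, hfH, hf2, if_pos (mem_Iic.mp hx)]
    ring
  have hgR : EqOn (fun x => fH x + f2 x) g (Ioi ξ) := by
    intro x hx
    simp only [hg, hfH, hf2, if_neg (not_le.mpr (mem_Ioi.mp hx))]
    ring
  have hhgL : EqOn (fun x => fF x - (4/3) * fb x) (fun x => hh x * g x) (Iic ξ) := by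
    intro x hx
    simp only [hg, hhh, hfF, hfb, if_pos (mem_Iic.mp hx)]
    ring
  have hhgR : EqOn (fun x => fF x + (4/3) * fb x) (fun x => hh x * g x) (Ioi ξ) := by
    intro x hx
    simp only [hg, hhh, hfF, hfb, if_neg (not_le.mpr (mem_Ioi.mp hx))]
    ring
  -- integrability of g and hh*g
  have hgIL : IntegrableOn g (Iic ξ) :=
    ((hintH.sub hint2).integrableOn).congr_fun hgL measurableSet_Iic
  have hgIR : IntegrableOn g (Ioi ξ) :=
    ((hintH.add hint2).integrableOn).congr_fun hgR measurableSet_Ioi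
  have hgI : Integrable g := by
    rw [← integrableOn_univ, ← Iic_union_Ioi (a := ξ)]
    exact hgIL.union hgIR
  have hfb43 : Integrable (fun x => (4/3 : ℝ) * fb x) := hintb.const_mul _
  have hhgIL : IntegrableOn (fun x => hh x * g x) (Iic ξ) :=
    ((hintF.sub hfb43).integrableOn).congr_fun hhgL measurableSet_Iic
  have hhgIR : IntegrableOn (fun x => hh x * g x) (Ioi ξ) :=
    ((hintF.add hfb43).integrableOn).congr_fun hhgR measurableSet_Ioi
  have hhgI : Integrable (fun x => hh x * g x) := by
    rw [← integrableOn_univ, ← Iic_union_Ioi (a := ξ)]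
    exact hhgIL.union hhgIR
  -- integral of g
  have EG : ∫ x, g x = (∫ x, fH x) - 2 * M := by
    rw [← intervalIntegral.integral_Iic_add_Ioi hgIL hgIR,
        ← intervalIntegral.integral_Iic_add_Ioi hintH.integrableOn hintH.integrableOn]
    have e1 : ∫ x in Iic ξ, g x = (∫ x in Iic ξ, fH x) - M := by
      rw [← setIntegral_congr_fun measurableSet_Iic hgL,
          integral_sub hintH.integrableOn hint2.integrableOn, I1]
    have e2 : ∫ x in Ioi ξ, g x = (∫ x in Ioi ξ, fH x) - M := by
      rw [← setIntegral_congr_fun measurableSet_Ioi hgR,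
          integral_add hintH.integrableOn hint2.integrableOn, I2]
      ring
    rw [e1, e2]; ring
  -- integral of hh * g
  have EF : ∫ x, hh x * g x = (∫ x, fF x) - (4/3) * M^2 := by
    rw [← intervalIntegral.integral_Iic_add_Ioi hhgIL hhgIR,
        ← intervalIntegral.integral_Iic_add_Ioi hintF.integrableOn hintF.integrableOn]
    have e1 : ∫ x in Iic ξ, hh x * g x = (∫ x in Iic ξ, fF x) - (2/3) * M^2 := by
      rw [← setIntegral_congr_fun measurableSet_Iic hhgL,
          integral_sub hintF.integrableOn hfb43.integrableOn, integral_const_mul, J1]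
      ring
    have e2 : ∫ x in Ioi ξ, hh x * g x = (∫ x in Ioi ξ, fF x) - (2/3) * M^2 := by
      rw [← setIntegral_congr_fun measurableSet_Ioi hhgR,
          integral_add hintF.integrableOn hfb43.integrableOn, integral_const_mul, J2]
      ring
    rw [e1, e2]; ring
  -- pointwise inequality
  have hpt : ∀ x, hh x * g x ≤ (4/3) * M * g x := by
    intro x
    have hu1 : 0 ≤ u x - u' x := by have := abs_le.mp (hub x); linarith [this.2]
    have hu2 : 0 ≤ u x + u' x := by have := abs_le.mp (hub x); linarith [this.1]
    have hv1 : 0 ≤ v x - v' x := by have := abs_le.mp (hvb x); linarith [this.2]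
    have hv2 : 0 ≤ v x + v' x := by have := abs_le.mp (hvb x); linarith [this.1]
    have hPM : u x * v x ≤ M := hmax x
    by_cases hx : x ≤ ξ
    · have hgx : g x = (u x - u' x) * (v x - v' x) := by simp [hg, if_pos hx]
      have hgnn : 0 ≤ g x := by rw [hgx]; positivity
      have hhx : hh x = u x * v x - (1/3) * (u' x * v' x + u x * v' x + u' x * v x) := by
        simp [hhh, if_pos hx]
      have hbound : hh x ≤ (4/3) * M := by
        have hplus : 0 ≤ (u x + u' x) * (v x + v' x) := mul_nonneg hu2 hv2
        rw [hhx]; nlinarith [hplus, hPM]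
      exact mul_le_mul_of_nonneg_right hbound hgnn
    · have hgx : g x = (u x + u' x) * (v x + v' x) := by simp [hg, if_neg hx]
      have hgnn : 0 ≤ g x := by rw [hgx]; positivity
      have hhx : hh x = u x * v x - (1/3) * u' x * v' x + (1/3) * (u x * v' x + u' x * v x) := by
        simp [hhh, if_neg hx]
      have hbound : hh x ≤ (4/3) * M := by
        have hminus : 0 ≤ (u x - u' x) * (v x - v' x) := mul_nonneg hu1 hv1
        rw [hhx]; nlinarith [hminus, hPM]
      exact mul_le_mul_of_nonneg_right hbound hgnn
  have hmono : ∫ x, hh x * g x ≤ ∫ x, (4/3) * M * g x :=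
    integral_mono hhgI (hgI.const_mul _) hpt
  rw [integral_const_mul, EG, EF] at hmono
  linarith
end

section
/- Let R_Z(x) = Σ_{i=1}^N a_i e^{-|x − z_i|} with a_i > 0 and |z_i − z_{i−1}| ≥ L/2. Then for any u ∈ H¹(ℝ): ‖u‖²_{H¹} − Σ_{i=1}^N 2a_i² = ‖u − R_Z‖²_{H¹} + 4Σ_{i=1}^N a_i(u(z_i) − a_i) + O(e^{−L/4}). -/
/-!
For `u ∈ H¹(ℝ)` and the peakon `φ_z(x) = e^{-|x - z|}`, integration by parts on each side of
`z` gives `⟨u, φ_z⟩_{H¹} = 2 u(z)`: on each half-line `u φ_z + u' φ_z'` is an exact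
derivative, and the jump of `φ_z'` at `z` leaves the boundary term `u(z)` twice. Applying this
to `u` and to `R_Z` itself turns the claimed identity into an exact equality whose defect is
`-2 Σ_i a_i (R_Z(z_i) - a_i) = -2 Σ_{i ≠ j} a_i a_j e^{-|z_i - z_j|}`, which the separation of
the `z_i` bounds by `2 (Σ_i |a_i|)² e^{-L/2}`.
-/

open MeasureTheory Real Set Filter Topology

section HalfLineFTC

variable {E : Type*} [NormedAddCommGroup E] [NormedSpace ℝ E] [CompleteSpace E]
  {f f' : ℝ → E} {a : ℝ} {m : E} {s : Set ℝ}

theorem integral_Ioi_of_hasDerivAt_off_countable_of_tendsto (hs : s.Countable)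
    (hcont : ContinuousOn f (Ici a)) (hderiv : ∀ x ∈ Ioi a \ s, HasDerivAt f (f' x) x)
    (f'int : IntegrableOn f' (Ioi a)) (hf : Tendsto f atTop (𝓝 m)) :
    ∫ x in Ioi a, f' x = m - f a := by
  refine tendsto_nhds_unique (intervalIntegral_tendsto_integral_Ioi a f'int tendsto_id) ?_
  refine (hf.sub_const _).congr' ?_
  filter_upwards [Ioi_mem_atTop a] with b hb
  refine (integral_eq_of_hasDerivAt_off_countable_of_le f f' hb.le hs
    (hcont.mono Icc_subset_Ici_self) (fun x hx => hderiv x ⟨hx.1.1, hx.2⟩) ?_).symm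
  exact (intervalIntegrable_iff_integrableOn_Ioc_of_le hb.le).2 (f'int.mono_set Ioc_subset_Ioi_self)

theorem integral_Iio_of_hasDerivAt_off_countable_of_tendsto (hs : s.Countable)
    (hcont : ContinuousOn f (Iic a)) (hderiv : ∀ x ∈ Iio a \ s, HasDerivAt f (f' x) x)
    (f'int : IntegrableOn f' (Iio a)) (hf : Tendsto f atBot (𝓝 m)) :
    ∫ x in Iio a, f' x = f a - m := by
  rw [← integrableOn_Iic_iff_integrableOn_Iio] at f'int
  rw [← integral_Iic_eq_integral_Iio]
  refine tendsto_nhds_unique (intervalIntegral_tendsto_integral_Iic a f'int tendsto_id) ?_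
  refine (hf.const_sub _).congr' ?_
  filter_upwards [Iio_mem_atBot a] with b hb
  refine (integral_eq_of_hasDerivAt_off_countable_of_le f f' hb.le hs
    (hcont.mono Icc_subset_Iic_self) (fun x hx => hderiv x ⟨hx.1.2, hx.2⟩) ?_).symm
  exact (intervalIntegrable_iff_integrableOn_Ioc_of_le hb.le).2 (f'int.mono_set Ioc_subset_Iic_self)

end HalfLineFTC

theorem aestronglyMeasurable_of_hasDerivAt_off_countable {u u' : ℝ → ℝ} {s : Set ℝ}
    (hs : s.Countable) (hd : ∀ x ∉ s, HasDerivAt u (u' x) x) : AEStronglyMeasurable u' := by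
  refine (measurable_deriv u).aestronglyMeasurable.congr ?_
  filter_upwards [measure_eq_zero_iff_ae_notMem.1 (hs.measure_zero volume)] with x hx
  exact (hd x hx).deriv

theorem integrable_exp_neg_abs : Integrable fun x : ℝ => exp (-|x|) := by
  set f := (Ici (0 : ℝ)).indicator fun x => exp (-x)
  have hf : Integrable f := by
    refine IntegrableOn.integrable_indicator ?_ measurableSet_Ici
    rw [integrableOn_Ici_iff_integrableOn_Ioi]
    simpa using exp_neg_integrableOn_Ioi 0 one_pos
  refine (hf.add hf.comp_neg).mono' (by fun_prop) (.of_forall fun x => ?_)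
  have hfx : 0 ≤ f x := indicator_nonneg (fun _ _ => (exp_pos _).le) x
  have hfnx : 0 ≤ f (-x) := indicator_nonneg (fun _ _ => (exp_pos _).le) (-x)
  rw [norm_of_nonneg (exp_pos _).le]
  rcases le_total 0 x with hx | hx
  · simp [f, hx, abs_of_nonneg hx, hfnx]
  · simp [f, hx, abs_of_nonpos hx, hfx]

noncomputable def peakon (z x : ℝ) : ℝ := exp (-|x - z|)

noncomputable def peakonDeriv (z x : ℝ) : ℝ := -sign (x - z) * exp (-|x - z|)

section Peakon

variable (z : ℝ)

theorem continuous_peakon : Continuous (peakon z) := by unfold peakon; fun_prop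

theorem peakon_le_one (x : ℝ) : peakon z x ≤ 1 := exp_le_one_iff.2 (by simp)

theorem hasDerivAt_peakon {x : ℝ} (hx : x ≠ z) : HasDerivAt (peakon z) (peakonDeriv z x) x := by
  refine (((hasDerivAt_abs (sub_ne_zero.2 hx)).comp x
    ((hasDerivAt_id x).sub_const z)).neg.exp).congr_deriv ?_
  rcases lt_or_gt_of_ne (sub_ne_zero.2 hx) with h | h
  · simp [peakonDeriv, Real.sign_of_neg h, sign_neg h, mul_comm]
  · simp [peakonDeriv, Real.sign_of_pos h, sign_pos h, mul_comm]

theorem integrable_peakon : Integrable (peakon z) :=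
  integrable_exp_neg_abs.comp_sub_right z

theorem memLp_peakon : MemLp (peakon z) 2 := by
  refine (memLp_two_iff_integrable_sq (continuous_peakon z).aestronglyMeasurable).2 ?_
  refine (integrable_peakon z).mono' ((continuous_peakon z).aestronglyMeasurable.pow 2)
    (.of_forall fun x => ?_)
  have h0 : 0 ≤ peakon z x := (exp_pos _).le
  rw [norm_of_nonneg (by positivity)]
  nlinarith [peakon_le_one z x]

theorem norm_peakonDeriv_le (x : ℝ) : ‖peakonDeriv z x‖ ≤ ‖peakon z x‖ := by
  rw [peakonDeriv, peakon, norm_mul, norm_neg]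
  rcases Real.sign_apply_eq (x - z) with h | h | h <;> simp [h, (exp_pos _).le]

theorem memLp_peakonDeriv : MemLp (peakonDeriv z) 2 :=
  (memLp_peakon z).of_le (aestronglyMeasurable_of_hasDerivAt_off_countable
    (countable_singleton z) fun _ hx => hasDerivAt_peakon z hx)
    (.of_forall (norm_peakonDeriv_le z))

theorem tendsto_peakon_atTop : Tendsto (peakon z) atTop (𝓝 0) :=
  tendsto_exp_atBot.comp <| tendsto_neg_atTop_atBot.comp <|
    tendsto_abs_atTop_atTop.comp <| tendsto_atTop_add_const_right _ (-z) tendsto_id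

theorem tendsto_peakon_atBot : Tendsto (peakon z) atBot (𝓝 0) :=
  tendsto_exp_atBot.comp <| tendsto_neg_atTop_atBot.comp <|
    tendsto_abs_atBot_atTop.comp <| tendsto_atBot_add_const_right _ (-z) tendsto_id

end Peakon

/-- Differentiability is only required off a countable set so that the peakons, which have a
corner, belong to the class. -/
structure IsDecayingH1 (u u' : ℝ → ℝ) : Prop where
  continuous : Continuous u
  hasDerivAt_off_countable : ∃ s : Set ℝ, s.Countable ∧ ∀ x ∉ s, HasDerivAt u (u' x) x
  memLp : MemLp u 2
  memLp_deriv : MemLp u' 2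
  tendsto_atTop : Tendsto u atTop (𝓝 0)
  tendsto_atBot : Tendsto u atBot (𝓝 0)

theorem isDecayingH1_peakon (z : ℝ) : IsDecayingH1 (peakon z) (peakonDeriv z) where
  continuous := continuous_peakon z
  hasDerivAt_off_countable := ⟨{z}, countable_singleton z, fun _ hx => hasDerivAt_peakon z hx⟩
  memLp := memLp_peakon z
  memLp_deriv := memLp_peakonDeriv z
  tendsto_atTop := tendsto_peakon_atTop z
  tendsto_atBot := tendsto_peakon_atBot z

namespace IsDecayingH1

variable {u u' : ℝ → ℝ}

theorem of_hasDerivAt (hu : ∀ x, HasDerivAt u (u' x) x) (hu2 : Integrable fun x => u x ^ 2)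
    (hu'2 : Integrable fun x => u' x ^ 2) (htop : Tendsto u atTop (𝓝 0))
    (hbot : Tendsto u atBot (𝓝 0)) : IsDecayingH1 u u' where
  continuous := continuous_iff_continuousAt.2 fun x => (hu x).continuousAt
  hasDerivAt_off_countable := ⟨∅, countable_empty, fun x _ => hu x⟩
  memLp := (memLp_two_iff_integrable_sq
    (continuous_iff_continuousAt.2 fun x => (hu x).continuousAt).aestronglyMeasurable).2 hu2
  memLp_deriv := (memLp_two_iff_integrable_sq (aestronglyMeasurable_of_hasDerivAt_off_countable
    countable_empty fun x _ => hu x)).2 hu'2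
  tendsto_atTop := htop
  tendsto_atBot := hbot

theorem const_mul (h : IsDecayingH1 u u') (c : ℝ) :
    IsDecayingH1 (fun x => c * u x) (fun x => c * u' x) where
  continuous := continuous_const.mul h.continuous
  hasDerivAt_off_countable := by
    obtain ⟨s, hs, hd⟩ := h.hasDerivAt_off_countable
    exact ⟨s, hs, fun x hx => (hd x hx).const_mul c⟩
  memLp := h.memLp.const_mul c
  memLp_deriv := h.memLp_deriv.const_mul c
  tendsto_atTop := by simpa using h.tendsto_atTop.const_mul c
  tendsto_atBot := by simpa using h.tendsto_atBot.const_mul c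

theorem sum {ι : Type*} [Fintype ι] {v v' : ι → ℝ → ℝ}
    (h : ∀ i, IsDecayingH1 (v i) (v' i)) :
    IsDecayingH1 (fun x => ∑ i, v i x) (fun x => ∑ i, v' i x) where
  continuous := continuous_finsetSum _ fun i _ => (h i).continuous
  hasDerivAt_off_countable := by
    choose s hs hd using fun i => (h i).hasDerivAt_off_countable
    refine ⟨⋃ i, s i, countable_iUnion hs, fun x hx => HasDerivAt.fun_sum fun i _ => ?_⟩
    exact hd i x fun hxs => hx (mem_iUnion.2 ⟨i, hxs⟩)
  memLp := memLp_finsetSum _ fun i _ => (h i).memLp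
  memLp_deriv := memLp_finsetSum _ fun i _ => (h i).memLp_deriv
  tendsto_atTop := by simpa using tendsto_finsetSum _ fun i _ => (h i).tendsto_atTop
  tendsto_atBot := by simpa using tendsto_finsetSum _ fun i _ => (h i).tendsto_atBot

theorem integrable_mul_peakon_add_mul_peakonDeriv (h : IsDecayingH1 u u') (z : ℝ) :
    Integrable fun x => u x * peakon z x + u' x * peakonDeriv z x :=
  (h.memLp.integrable_mul (memLp_peakon z)).add
    (h.memLp_deriv.integrable_mul (memLp_peakonDeriv z))

theorem setIntegral_Ioi_mul_peakon_add_mul_peakonDeriv (h : IsDecayingH1 u u') (z : ℝ) :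
    ∫ x in Ioi z, (u x * peakon z x + u' x * peakonDeriv z x) = u z := by
  obtain ⟨s, hs, hd⟩ := h.hasDerivAt_off_countable
  have hc := h.continuous
  have hrepr : ∀ x ∈ Ioi z,
      u x * peakon z x + u' x * peakonDeriv z x = (u x - u' x) * exp (z - x) := by
    intro x hx
    have hxz : 0 < x - z := sub_pos.2 hx
    rw [peakon, peakonDeriv, Real.sign_of_pos hxz, abs_of_pos hxz, neg_sub]
    ring
  rw [setIntegral_congr_fun measurableSet_Ioi hrepr]
  have hderiv : ∀ x ∈ Ioi z \ s,
      HasDerivAt (fun y => -u y * exp (z - y)) ((u x - u' x) * exp (z - x)) x := fun x hx =>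
    ((hd x hx.2).neg.mul ((hasDerivAt_id x).const_sub z).exp).congr_deriv (by simp; ring)
  have hlim : Tendsto (fun y => -u y * exp (z - y)) atTop (𝓝 0) := by
    simpa [sub_eq_add_neg] using h.tendsto_atTop.neg.mul
      (tendsto_exp_atBot.comp (tendsto_atBot_add_const_left _ z tendsto_neg_atTop_atBot))
  simpa using integral_Ioi_of_hasDerivAt_off_countable_of_tendsto hs (by fun_prop) hderiv
    ((h.integrable_mul_peakon_add_mul_peakonDeriv z).integrableOn.congr_fun hrepr
      measurableSet_Ioi) hlim

theorem setIntegral_Iio_mul_peakon_add_mul_peakonDeriv (h : IsDecayingH1 u u') (z : ℝ) :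
    ∫ x in Iio z, (u x * peakon z x + u' x * peakonDeriv z x) = u z := by
  obtain ⟨s, hs, hd⟩ := h.hasDerivAt_off_countable
  have hc := h.continuous
  have hrepr : ∀ x ∈ Iio z,
      u x * peakon z x + u' x * peakonDeriv z x = (u x + u' x) * exp (x - z) := by
    intro x hx
    have hxz : x - z < 0 := sub_neg.2 hx
    rw [peakon, peakonDeriv, Real.sign_of_neg hxz, abs_of_neg hxz, neg_neg]
    ring
  rw [setIntegral_congr_fun measurableSet_Iio hrepr]
  have hderiv : ∀ x ∈ Iio z \ s,
      HasDerivAt (fun y => u y * exp (y - z)) ((u x + u' x) * exp (x - z)) x := fun x hx =>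
    ((hd x hx.2).mul ((hasDerivAt_id x).sub_const z).exp).congr_deriv (by simp; ring)
  have hlim : Tendsto (fun y => u y * exp (y - z)) atBot (𝓝 0) := by
    simpa [sub_eq_add_neg] using h.tendsto_atBot.mul
      (tendsto_exp_atBot.comp (tendsto_atBot_add_const_right _ (-z) tendsto_id))
  simpa using integral_Iio_of_hasDerivAt_off_countable_of_tendsto hs (by fun_prop) hderiv
    ((h.integrable_mul_peakon_add_mul_peakonDeriv z).integrableOn.congr_fun hrepr
      measurableSet_Iio) hlim

theorem integral_mul_peakon_add_mul_peakonDeriv (h : IsDecayingH1 u u') (z : ℝ) :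
    ∫ x, (u x * peakon z x + u' x * peakonDeriv z x) = 2 * u z := by
  rw [← integral_add_compl measurableSet_Iic (h.integrable_mul_peakon_add_mul_peakonDeriv z),
    compl_Iic, integral_Iic_eq_integral_Iio, h.setIntegral_Iio_mul_peakon_add_mul_peakonDeriv,
    h.setIntegral_Ioi_mul_peakon_add_mul_peakonDeriv]
  ring

end IsDecayingH1

theorem integral_sub_sq_add_sub_sq {u u' v v' : ℝ → ℝ} (hu : MemLp u 2) (hu' : MemLp u' 2)
    (hv : MemLp v 2) (hv' : MemLp v' 2) :
    ∫ x, ((u x - v x) ^ 2 + (u' x - v' x) ^ 2) = (∫ x, (u x ^ 2 + u' x ^ 2))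
      - 2 * (∫ x, (u x * v x + u' x * v' x)) + ∫ x, (v x * v x + v' x * v' x) := by
  have hsq : Integrable fun x => u x ^ 2 + u' x ^ 2 := hu.integrable_sq.add hu'.integrable_sq
  have hcross : Integrable fun x => u x * v x + u' x * v' x :=
    (hu.integrable_mul hv).add (hu'.integrable_mul hv')
  have hvv : Integrable fun x => v x * v x + v' x * v' x :=
    (hv.integrable_mul hv).add (hv'.integrable_mul hv')
  have hexpand : ∀ x, (u x - v x) ^ 2 + (u' x - v' x) ^ 2 = (u x ^ 2 + u' x ^ 2)
      - 2 * (u x * v x + u' x * v' x) + (v x * v x + v' x * v' x) := fun x => by ring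
  have hdiff : Integrable fun x => u x ^ 2 + u' x ^ 2 - 2 * (u x * v x + u' x * v' x) :=
    hsq.sub (hcross.const_mul 2)
  simp_rw [hexpand]
  rw [integral_add hdiff hvv, integral_sub hsq (hcross.const_mul 2), integral_const_mul]

section Multipeakon

variable {ι : Type*} [Fintype ι] (a z : ι → ℝ)

noncomputable def multipeakon (x : ℝ) : ℝ := ∑ i, a i * peakon (z i) x

noncomputable def multipeakonDeriv (x : ℝ) : ℝ := ∑ i, a i * peakonDeriv (z i) x

theorem isDecayingH1_multipeakon : IsDecayingH1 (multipeakon a z) (multipeakonDeriv a z) :=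
  IsDecayingH1.sum fun i => (isDecayingH1_peakon (z i)).const_mul (a i)

theorem IsDecayingH1.integral_mul_multipeakon_add_mul_multipeakonDeriv {u u' : ℝ → ℝ}
    (h : IsDecayingH1 u u') :
    ∫ x, (u x * multipeakon a z x + u' x * multipeakonDeriv a z x)
      = 2 * ∑ i, a i * u (z i) := by
  have hsplit : ∀ x, u x * multipeakon a z x + u' x * multipeakonDeriv a z x
      = ∑ i, a i * (u x * peakon (z i) x + u' x * peakonDeriv (z i) x) := by
    intro x
    simp only [multipeakon, multipeakonDeriv, Finset.mul_sum, ← Finset.sum_add_distrib]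
    exact Finset.sum_congr rfl fun i _ => by ring
  simp_rw [hsplit]
  rw [integral_finsetSum _ fun i _ =>
    (h.integrable_mul_peakon_add_mul_peakonDeriv (z i)).const_mul (a i)]
  simp_rw [integral_const_mul, h.integral_mul_peakon_add_mul_peakonDeriv, Finset.mul_sum]
  exact Finset.sum_congr rfl fun i _ => by ring

theorem multipeakon_self_sub (i : ι) [DecidableEq ι] :
    multipeakon a z (z i) - a i = ∑ j ∈ Finset.univ.erase i, a j * exp (-|z i - z j|) := by
  rw [multipeakon, ← Finset.add_sum_erase _ _ (Finset.mem_univ i)]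
  simp [peakon]

theorem abs_sum_mul_multipeakon_sub_le {δ : ℝ} (hsep : ∀ i j, i ≠ j → δ ≤ |z i - z j|) :
    |∑ i, a i * (multipeakon a z (z i) - a i)| ≤ (∑ i, |a i|) ^ 2 * exp (-δ) := by
  classical
  have hoff : ∀ i, |multipeakon a z (z i) - a i| ≤ (∑ j, |a j|) * exp (-δ) := by
    intro i
    rw [multipeakon_self_sub, Finset.sum_mul]
    refine (Finset.abs_sum_le_sum_abs _ _).trans <| (Finset.sum_le_sum fun j hj => ?_).trans <|
      Finset.sum_le_sum_of_subset_of_nonneg (Finset.subset_univ _) fun j _ _ => by positivity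
    rw [abs_mul, abs_of_pos (exp_pos _)]
    exact mul_le_mul_of_nonneg_left
      (exp_le_exp.2 (neg_le_neg (hsep i j (Finset.ne_of_mem_erase hj).symm))) (abs_nonneg _)
  calc |∑ i, a i * (multipeakon a z (z i) - a i)|
      ≤ ∑ i, |a i| * ((∑ j, |a j|) * exp (-δ)) := by
        refine (Finset.abs_sum_le_sum_abs _ _).trans (Finset.sum_le_sum fun i _ => ?_)
        rw [abs_mul]
        exact mul_le_mul_of_nonneg_left (hoff i) (abs_nonneg _)
    _ = (∑ i, |a i|) ^ 2 * exp (-δ) := by rw [← Finset.sum_mul]; ring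

end Multipeakon

theorem multipeakon_global_identity_general (N : ℕ) (a : Fin N → ℝ) :
    ∃ C > 0, ∀ (L : ℝ) (z : Fin N → ℝ), 0 < L →
      (∀ i j : Fin N, i ≠ j → L/2 ≤ |z i - z j|) →
      ∀ (u u' : ℝ → ℝ), (∀ x, HasDerivAt u (u' x) x) →
        Integrable (fun x => (u x)^2) → Integrable (fun x => (u' x)^2) →
        Filter.Tendsto u Filter.atTop (nhds 0) →
        Filter.Tendsto u Filter.atBot (nhds 0) →
        |(∫ x : ℝ, ((u x)^2 + (u' x)^2)) - (∑ i, 2 * (a i)^2)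
            - ((∫ x : ℝ, ((u x - ∑ i, a i * Real.exp (-|x - z i|))^2
                + (u' x - ∑ i, -(Real.sign (x - z i)) * a i * Real.exp (-|x - z i|))^2))
              + 4 * ∑ i, a i * (u (z i) - a i))|
          ≤ C * Real.exp (-L/4) := by
  refine ⟨2 * (∑ i, |a i|) ^ 2 + 1, by positivity, ?_⟩
  intro L z hL hsep u u' hu hu2 hu'2 htop hbot
  have hu_H1 := IsDecayingH1.of_hasDerivAt hu hu2 hu'2 htop hbot
  have hR := isDecayingH1_multipeakon a z
  have hR' : ∀ x, ∑ i, -(sign (x - z i)) * a i * exp (-|x - z i|) = multipeakonDeriv a z x :=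
    fun x => Finset.sum_congr rfl fun i _ => by rw [peakonDeriv]; ring
  have hdist : ∫ x, ((u x - ∑ i, a i * exp (-|x - z i|)) ^ 2
        + (u' x - ∑ i, -(sign (x - z i)) * a i * exp (-|x - z i|)) ^ 2)
      = (∫ x, (u x ^ 2 + u' x ^ 2)) - 2 * (2 * ∑ i, a i * u (z i))
        + 2 * ∑ i, a i * multipeakon a z (z i) := calc
    _ = ∫ x, ((u x - multipeakon a z x) ^ 2 + (u' x - multipeakonDeriv a z x) ^ 2) := by
      simp_rw [hR']; rfl
    _ = _ := by
      rw [integral_sub_sq_add_sub_sq hu_H1.memLp hu_H1.memLp_deriv hR.memLp hR.memLp_deriv,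
        hu_H1.integral_mul_multipeakon_add_mul_multipeakonDeriv,
        hR.integral_mul_multipeakon_add_mul_multipeakonDeriv]
  have hgap : (∫ x, (u x ^ 2 + u' x ^ 2)) - ∑ i, 2 * a i ^ 2
      - ((∫ x, (u x ^ 2 + u' x ^ 2)) - 2 * (2 * ∑ i, a i * u (z i))
        + 2 * ∑ i, a i * multipeakon a z (z i) + 4 * ∑ i, a i * (u (z i) - a i))
      = -2 * ∑ i, a i * (multipeakon a z (z i) - a i) := by
    simp only [mul_sub, Finset.sum_sub_distrib, ← Finset.mul_sum, sq]
    ring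
  rw [hdist, hgap, abs_mul, abs_neg, abs_two]
  have hexp : exp (-(L / 2)) ≤ exp (-L / 4) := exp_le_exp.2 (by linarith)
  calc 2 * |∑ i, a i * (multipeakon a z (z i) - a i)|
      ≤ 2 * ((∑ i, |a i|) ^ 2 * exp (-(L / 2))) := by
        gcongr; exact abs_sum_mul_multipeakon_sub_le a z hsep
    _ ≤ (2 * (∑ i, |a i|) ^ 2 + 1) * exp (-L / 4) := by nlinarith [exp_pos (-L / 4)]

theorem multipeakon_global_identity (N : ℕ) (a : Fin N → ℝ)
    (ha : ∀ i, 0 < a i) :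
    ∃ C > 0, ∀ (L : ℝ) (z : Fin N → ℝ), 0 < L →
      (∀ i j : Fin N, i ≠ j → L/2 ≤ |z i - z j|) →
      ∀ (u u' : ℝ → ℝ), (∀ x, HasDerivAt u (u' x) x) →
        Integrable (fun x => (u x)^2) → Integrable (fun x => (u' x)^2) →
        Filter.Tendsto u Filter.atTop (nhds 0) →
        Filter.Tendsto u Filter.atBot (nhds 0) →
        |(∫ x : ℝ, ((u x)^2 + (u' x)^2)) - (∑ i, 2 * (a i)^2)
            - ((∫ x : ℝ, ((u x - ∑ i, a i * Real.exp (-|x - z i|))^2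
                + (u' x - ∑ i, -(Real.sign (x - z i)) * a i * Real.exp (-|x - z i|))^2))
              + 4 * ∑ i, a i * (u (z i) - a i))|
          ≤ C * Real.exp (-L/4) :=
  multipeakon_global_identity_general N a
end

section
/- Let u, v ∈ H³(ℝ) with u, v ≥ 0 and |u_x| ≤ u, |v_x| ≤ v pointwise. Then ∫_ℝ (u(x)v(x) + u_x(x)v_x(x)) dx ≥ 2·max_{x∈ℝ}(u(x)v(x)). -/
open MeasureTheory

theorem H_ge_twice_max (ξ : ℝ)
    (u u' v v' : ℝ → ℝ)
    (hu : ∀ x, HasDerivAt u (u' x) x)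
    (hv : ∀ x, HasDerivAt v (v' x) x)
    (hupos : ∀ x, 0 ≤ u x) (hvpos : ∀ x, 0 ≤ v x)
    (hub : ∀ x, |u' x| ≤ u x) (hvb : ∀ x, |v' x| ≤ v x)
    (hmax : ∀ x, u x * v x ≤ u ξ * v ξ)
    (hdecaytop : Filter.Tendsto (fun x => u x * v x) Filter.atTop (nhds 0))
    (hdecaybot : Filter.Tendsto (fun x => u x * v x) Filter.atBot (nhds 0))
    (hintH : Integrable (fun x => u x * v x + u' x * v' x))
    (hint2 : Integrable (fun x => u x * v' x + u' x * v x)) :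
    2 * (u ξ * v ξ) ≤ ∫ x : ℝ, (u x * v x + u' x * v' x) := by
  have hg : ∀ x, HasDerivAt (fun x => u x * v x) (u' x * v x + u x * v' x) x :=
    fun x => (hu x).mul (hv x)
  have hint2' : Integrable (fun x => u' x * v x + u x * v' x) := by
    have : (fun x => u' x * v x + u x * v' x) = fun x => u x * v' x + u' x * v x := by
      funext x; ring
    rw [this]; exact hint2
  -- FTC on half-lines
  have hC : ∫ x in Set.Iic ξ, (u' x * v x + u x * v' x) = u ξ * v ξ - 0 :=
    MeasureTheory.integral_Iic_of_hasDerivAt_of_tendsto'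
      (fun x _ => hg x) hint2'.integrableOn hdecaybot
  have hD : ∫ x in Set.Ioi ξ, (u' x * v x + u x * v' x) = 0 - u ξ * v ξ :=
    MeasureTheory.integral_Ioi_of_hasDerivAt_of_tendsto
      ((hg ξ).continuousAt.continuousWithinAt) (fun x _ => hg x)
      hint2'.integrableOn hdecaytop
  -- nonnegativity on Iic : (u - u')(v - v') ≥ 0
  have hA : 0 ≤ ∫ x in Set.Iic ξ,
      ((u x * v x + u' x * v' x) - (u' x * v x + u x * v' x)) := by
    refine setIntegral_nonneg measurableSet_Iic (fun x _ => ?_)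
    have h1 := (abs_le.mp (hub x)).2
    have h2 := (abs_le.mp (hvb x)).2
    nlinarith [mul_nonneg (sub_nonneg.2 h1) (sub_nonneg.2 h2)]
  have hB : 0 ≤ ∫ x in Set.Ioi ξ,
      ((u x * v x + u' x * v' x) + (u' x * v x + u x * v' x)) := by
    refine setIntegral_nonneg measurableSet_Ioi (fun x _ => ?_)
    have h1 := (abs_le.mp (hub x)).1
    have h2 := (abs_le.mp (hvb x)).1
    nlinarith [mul_nonneg (by linarith : (0:ℝ) ≤ u x + u' x)
      (by linarith : (0:ℝ) ≤ v x + v' x)]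
  rw [integral_sub hintH.integrableOn hint2'.integrableOn, hC] at hA
  rw [integral_add hintH.integrableOn hint2'.integrableOn, hD] at hB
  rw [← intervalIntegral.integral_Iic_add_Ioi hintH.integrableOn hintH.integrableOn]
  linarith
end
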